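/- Let M be a totally umbilical quaternion CR-submanifold of a locally conformal quaternion Kaehler manifold M̄. Then for any X ∈ Γ(D) and Y ∈ Γ(D^⊥), the curvature tensor of M̄ satisfies R̄(X, Y, J_aX, J_aY) = 0 for each a = 1,2,3. -/

import Mathlib

/-!
Abstract model of a locally conformal quaternion Kaehler (l.c.q.K.) manifold `M̄`
together with a quaternion CR-submanifold `M`.

`R` plays the role of the (commutative) ring of smooth functions on `M̄` and `V`
that of the `R`-module of vector fields on `M̄`.  The structure `LCQK` records:
a derivation action `act` of vector fields on functions, the Lie bracket, the
Riemannian metric `g`, its Levi-Civita connection `nabla`, the three local almost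
complex structures `J a` (a = 1,2,3, indexed by `Fin 3`) satisfying the quaternionic
identities and compatibility with `g`, the Lee vector field `B` (the Lee form is
`ω X = g X B`), the skew-symmetric matrix `Q` of local 1-forms, and the fundamental
structure equation (2.4) of a l.c.q.K. manifold:
`∇̄_X (J_a Y) = J_a ∇̄_X Y + ½{θ_a(Y) X − ω(Y) J_a X − Ω_a(X,Y) B + g(X,Y) J_a B}
   + Q_{ab}(X) J_b Y + Q_{ac}(X) J_c Y`,
where `θ_a = ω ∘ J_a` and `Ω_a(X,Y) = g(X, J_a Y)`.
`half` is the function `1/2`.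
-/
structure LCQK (R : Type) (V : Type) [CommRing R] [AddCommGroup V] [Module R V] where
  half : R
  half_add : half + half = 1
  /-- action of a vector field on a function (derivation) -/
  act : V → R → R
  act_add : ∀ X f g, act X (f + g) = act X f + act X g
  act_mul : ∀ X f g, act X (f * g) = f * act X g + g * act X f
  /-- Lie bracket of vector fields -/
  bracket : V → V → V
  /-- the Riemannian metric of `M̄` -/
  g : V → V → R
  g_symm : ∀ X Y, g X Y = g Y X
  g_add_left : ∀ X Y Z, g (X + Y) Z = g X Z + g Y Z
  g_smul_left : ∀ (f : R) (X Y : V), g (f • X) Y = f * g X Y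
  /-- the Levi-Civita connection `∇̄` of `M̄` -/
  nabla : V → V → V
  nabla_add_left : ∀ X Y Z, nabla (X + Y) Z = nabla X Z + nabla Y Z
  nabla_smul_left : ∀ (f : R) (X Y : V), nabla (f • X) Y = f • nabla X Y
  nabla_add_right : ∀ X Y Z, nabla X (Y + Z) = nabla X Y + nabla X Z
  nabla_smul_right : ∀ (X : V) (f : R) (Y : V),
    nabla X (f • Y) = f • nabla X Y + act X f • Y
  nabla_metric : ∀ X Y Z, act X (g Y Z) = g (nabla X Y) Z + g Y (nabla X Z)
  torsion_free : ∀ X Y, nabla X Y - nabla Y X = bracket X Y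
  /-- the local almost complex structures `J₁, J₂, J₃` spanning the bundle `H` -/
  J : Fin 3 → V → V
  J_add : ∀ a X Y, J a (X + Y) = J a X + J a Y
  J_smul : ∀ a (f : R) (X : V), J a (f • X) = f • J a X
  J_sq : ∀ a X, J a (J a X) = -X
  J_cyc : ∀ a X, J a (J (a + 1) X) = J (a + 2) X
  g_J : ∀ a X Y, g (J a X) (J a Y) = g X Y
  /-- the Lee vector field `B` (so the Lee form is `ω X = g X B`) -/
  B : V
  /-- the skew-symmetric matrix of local 1-forms `Q_{ab}` -/
  Q : Fin 3 → Fin 3 → V → R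
  Q_skew : ∀ a b X, Q a b X = -Q b a X
  /-- the l.c.q.K. structure equation (2.4) -/
  struct_eq : ∀ a X Y,
    nabla X (J a Y) = J a (nabla X Y)
      + half • ((g (J a Y) B) • X - (g Y B) • J a X - (g X (J a Y)) • B
          + (g X Y) • J a B)
      + (Q a (a + 1) X) • J (a + 1) Y + (Q a (a + 2) X) • J (a + 2) Y

namespace LCQK

variable {R V : Type} [CommRing R] [AddCommGroup V] [Module R V]

/-- the Lee form `ω X = g(X, B)` -/
def lee (d : LCQK R V) (X : V) : R := d.g X d.B

/-- the fundamental 2-forms `Ω_a(X,Y) = g(X, J_a Y)` -/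
def Om (d : LCQK R V) (a : Fin 3) (X Y : V) : R := d.g X (d.J a Y)

/-- the curvature tensor `R̄(X,Y)Z` of the Levi-Civita connection of `M̄` -/
def curv (d : LCQK R V) (X Y Z : V) : V :=
  d.nabla X (d.nabla Y Z) - d.nabla Y (d.nabla X Z) - d.nabla (d.bracket X Y) Z

/-- the (0,4) curvature tensor `R̄(X,Y,Z,W) = g(R̄(X,Y)Z, W)` of `M̄` -/
def R4 (d : LCQK R V) (X Y Z W : V) : R := d.g (d.curv X Y Z) W

end LCQK

/-- A quaternion CR-submanifold `M` of the l.c.q.K. manifold `M̄`.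

`DD` is (the module of sections of) the quaternion (invariant) distribution `D`,
`Dp` the totally real (anti-invariant) distribution `D^⊥`; they are orthogonal and
the tangent bundle of `M` is `TM = D ⊕ D^⊥` (modelled by `DD ⊔ Dp`); each `J_a`
preserves `D` and maps `D^⊥` into the normal bundle `TM^⊥`.  `tan` is the
orthogonal projection of `M̄`-vector fields onto the tangent part of `M`. -/
structure QCRSub (R V : Type) [CommRing R] [AddCommGroup V] [Module R V]
    (d : LCQK R V) where
  DD : Submodule R V
  Dp : Submodule R V
  orth : ∀ X ∈ DD, ∀ Z ∈ Dp, d.g X Z = 0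
  J_inv : ∀ (a : Fin 3), ∀ X ∈ DD, d.J a X ∈ DD
  J_anti : ∀ (a : Fin 3), ∀ Z ∈ Dp, ∀ Y ∈ DD ⊔ Dp, d.g (d.J a Z) Y = 0
  /-- tangential projection onto `TM = D ⊕ D^⊥` -/
  tan : V → V
  tan_add : ∀ X Y, tan (X + Y) = tan X + tan Y
  tan_smul : ∀ (f : R) (X : V), tan (f • X) = f • tan X
  tan_mem : ∀ X, tan X ∈ DD ⊔ Dp
  tan_of_mem : ∀ X ∈ DD ⊔ Dp, tan X = X
  tan_orth : ∀ (X : V), ∀ Y ∈ DD ⊔ Dp, d.g (X - tan X) Y = 0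
  bracket_tangent : ∀ X ∈ DD ⊔ Dp, ∀ Y ∈ DD ⊔ Dp, d.bracket X Y ∈ DD ⊔ Dp

namespace QCRSub

variable {R V : Type} [CommRing R] [AddCommGroup V] [Module R V] {d : LCQK R V}

/-- the tangent bundle `TM = D ⊕ D^⊥` of `M` -/
def Tg (s : QCRSub R V d) : Submodule R V := s.DD ⊔ s.Dp

/-- a vector field is normal to `M` if it is orthogonal to all tangent fields -/
def IsNormal (s : QCRSub R V d) (N : V) : Prop := ∀ Y ∈ s.Tg, d.g N Y = 0

/-- normal part of a vector field along `M` -/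
def nor (s : QCRSub R V d) (X : V) : V := X - s.tan X

/-- the induced (Levi-Civita) connection `∇` of `M` (Gauss formula) -/
def conn (s : QCRSub R V d) (X Y : V) : V := s.tan (d.nabla X Y)

/-- the second fundamental form `h` of `M` (Gauss formula `∇̄_X Y = ∇_X Y + h(X,Y)`) -/
def h (s : QCRSub R V d) (X Y : V) : V := d.nabla X Y - s.tan (d.nabla X Y)

/-- the shape operator `A_N X` (Weingarten formula `∇̄_X N = −A_N X + ∇^⊥_X N`) -/
def A (s : QCRSub R V d) (N X : V) : V := -(s.tan (d.nabla X N))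

/-- the normal connection `∇^⊥` -/
def nconn (s : QCRSub R V d) (X N : V) : V := d.nabla X N - s.tan (d.nabla X N)

/-- `φ_a X`: tangential part of `J_a X` for `X` tangent -/
def phi (s : QCRSub R V d) (a : Fin 3) (X : V) : V := s.tan (d.J a X)

/-- `ϖ_a X`: normal part of `J_a X` for `X` tangent -/
def varpi (s : QCRSub R V d) (a : Fin 3) (X : V) : V := s.nor (d.J a X)

/-- `f_a N`: tangential part of `J_a N` for `N` normal -/
def fpart (s : QCRSub R V d) (a : Fin 3) (N : V) : V := s.tan (d.J a N)

/-- `t_a N`: normal (μ-)part of `J_a N` for `N` normal -/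
def tn (s : QCRSub R V d) (a : Fin 3) (N : V) : V := s.nor (d.J a N)

/-- membership in `μ`, the orthogonal complement of the `J_a D^⊥` in `TM^⊥` -/
def inMu (s : QCRSub R V d) (N : V) : Prop :=
  s.IsNormal N ∧ ∀ (a : Fin 3), ∀ Z ∈ s.Dp, d.g N (d.J a Z) = 0

end QCRSub

/-!
The Gauss formula `∇̄_X Y = ∇_X Y + h(X,Y)` turns `R̄(X,Y,Z,N)`, for `N` normal, into Codazzi
terms in `h`. When `h(X,Y) = g(X,Y) H`, every term involving a derivative of `g` or the induced
connection carries the factor `g(H,N)`, and these cancel because `∇̄` is metric and torsion free,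
leaving `R̄(X,Y,Z,N) = g(Y,Z) g(∇̄_X H, N) − g(X,Z) g(∇̄_Y H, N)`. For `X ∈ D`, `Y ∈ D^⊥`,
`Z = J_a X` and `N = J_a Y` both coefficients vanish: `J_a X ∈ D` is orthogonal to `Y`, and
`g(X, J_a X) = 0` because `J_a` is `g`-orthogonal with `J_a² = −1`.
-/

namespace LCQK

variable {R V : Type} [CommRing R] [AddCommGroup V] [Module R V] (d : LCQK R V)

lemma g_add_right (X Y Z : V) : d.g X (Y + Z) = d.g X Y + d.g X Z := by
  rw [d.g_symm, d.g_add_left, d.g_symm Y, d.g_symm Z]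

lemma g_neg_left (X Y : V) : d.g (-X) Y = -d.g X Y := by
  rw [← neg_one_smul R X, d.g_smul_left, neg_one_mul]

lemma g_sub_left (X Y Z : V) : d.g (X - Y) Z = d.g X Z - d.g Y Z := by
  rw [sub_eq_add_neg, d.g_add_left, d.g_neg_left, ← sub_eq_add_neg]

lemma g_J_self_eq_zero (a : Fin 3) (X : V) : d.g X (d.J a X) = 0 := by
  have hneg := d.g_J a X (d.J a X)
  rw [d.J_sq, d.g_symm, d.g_neg_left] at hneg
  linear_combination (-d.half) * hneg - d.g X (d.J a X) * d.half_add

lemma g_nabla_smul (X : V) (f : R) (Y W : V) :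
    d.g (d.nabla X (f • Y)) W = f * d.g (d.nabla X Y) W + d.act X f * d.g Y W := by
  rw [d.nabla_smul_right, d.g_add_left, d.g_smul_left, d.g_smul_left]

lemma act_g_sub_act_g (X Y Z : V) :
    d.act X (d.g Y Z) - d.act Y (d.g X Z)
      = d.g (d.bracket X Y) Z + d.g Y (d.nabla X Z) - d.g X (d.nabla Y Z) := by
  rw [d.nabla_metric, d.nabla_metric, ← d.torsion_free, d.g_sub_left]
  ring

end LCQK

namespace QCRSub

variable {R V : Type} [CommRing R] [AddCommGroup V] [Module R V] {d : LCQK R V}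
  (s : QCRSub R V d)

def IsUmbilicalWith (H : V) : Prop := ∀ X ∈ s.Tg, ∀ Y ∈ s.Tg, s.h X Y = d.g X Y • H

lemma conn_mem_Tg (X Y : V) : s.conn X Y ∈ s.Tg := s.tan_mem _

lemma bracket_mem_Tg {X Y : V} (hX : X ∈ s.Tg) (hY : Y ∈ s.Tg) : d.bracket X Y ∈ s.Tg :=
  s.bracket_tangent X hX Y hY

lemma isNormal_h (X Y : V) : s.IsNormal (s.h X Y) := s.tan_orth _

lemma nabla_eq_conn_add_h (X Y : V) : d.nabla X Y = s.conn X Y + s.h X Y :=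
  (add_sub_cancel _ _).symm

lemma g_nabla_of_isNormal {N : V} (hN : s.IsNormal N) (X Y : V) :
    d.g (d.nabla X Y) N = d.g (s.h X Y) N := by
  rw [s.nabla_eq_conn_add_h, d.g_add_left, d.g_symm (s.conn X Y), hN _ (s.conn_mem_Tg X Y),
    zero_add]

lemma g_nabla_eq_g_conn {Y : V} (hY : Y ∈ s.Tg) (X Z : V) :
    d.g Y (d.nabla X Z) = d.g Y (s.conn X Z) := by
  rw [s.nabla_eq_conn_add_h, d.g_add_right, d.g_symm Y (s.h X Z), s.isNormal_h X Z Y hY,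
    add_zero]

lemma g_curv_of_isNormal {N : V} (hN : s.IsNormal N) (X Y Z : V) :
    d.g (d.curv X Y Z) N
      = d.g (d.nabla X (s.h Y Z)) N - d.g (d.nabla Y (s.h X Z)) N
        + d.g (s.h X (s.conn Y Z)) N - d.g (s.h Y (s.conn X Z)) N
        - d.g (s.h (d.bracket X Y) Z) N := by
  rw [LCQK.curv, s.nabla_eq_conn_add_h Y Z, s.nabla_eq_conn_add_h X Z, d.nabla_add_right,
    d.nabla_add_right, d.g_sub_left, d.g_sub_left, d.g_add_left, d.g_add_left,
    s.g_nabla_of_isNormal hN X (s.conn Y Z), s.g_nabla_of_isNormal hN Y (s.conn X Z),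
    s.g_nabla_of_isNormal hN (d.bracket X Y) Z]
  ring

lemma g_curv_of_isUmbilicalWith {H : V} (hH : s.IsUmbilicalWith H) {X Y Z N : V}
    (hX : X ∈ s.Tg) (hY : Y ∈ s.Tg) (hZ : Z ∈ s.Tg) (hN : s.IsNormal N) :
    d.g (d.curv X Y Z) N
      = d.g Y Z * d.g (d.nabla X H) N - d.g X Z * d.g (d.nabla Y H) N := by
  rw [s.g_curv_of_isNormal hN, hH Y hY Z hZ, hH X hX Z hZ, hH X hX _ (s.conn_mem_Tg Y Z),
    hH Y hY _ (s.conn_mem_Tg X Z), hH _ (s.bracket_mem_Tg hX hY) Z hZ, d.g_nabla_smul,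
    d.g_nabla_smul, d.g_smul_left, d.g_smul_left, d.g_smul_left]
  linear_combination d.g H N * (d.act_g_sub_act_g X Y Z + s.g_nabla_eq_g_conn hY X Z
    - s.g_nabla_eq_g_conn hX Y Z)

end QCRSub

theorem curvature_JJ_vanishes_general {R V : Type} [CommRing R] [AddCommGroup V] [Module R V]
    (d : LCQK R V) (s : QCRSub R V d)
    (Hm : V)
    (humb : ∀ X ∈ s.Tg, ∀ Y ∈ s.Tg, s.h X Y = d.g X Y • Hm) :
    ∀ (a : Fin 3), ∀ X ∈ s.DD, ∀ Y ∈ s.Dp,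
      d.R4 X Y (d.J a X) (d.J a Y) = 0 := by
  intro a X hX Y hY
  have hJX : d.J a X ∈ s.DD := s.J_inv a X hX
  have hJY : s.IsNormal (d.J a Y) := s.J_anti a Y hY
  rw [LCQK.R4, s.g_curv_of_isUmbilicalWith humb (Submodule.mem_sup_left hX)
    (Submodule.mem_sup_right hY) (Submodule.mem_sup_left hJX) hJY, d.g_symm Y,
    s.orth _ hJX Y hY, d.g_J_self_eq_zero]
  ring

/-- equation (4.7): Let `M` be a totally umbilical quaternion
CR-submanifold of a l.c.q.K. manifold `M̄`.  Then for any `X ∈ Γ(D)` and `Y ∈ Γ(D^⊥)`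
the curvature tensor of `M̄` satisfies `R̄(X, Y, J_aX, J_aY) = 0` for each `a`. -/
theorem curvature_JJ_vanishes {R V : Type} [CommRing R] [AddCommGroup V] [Module R V]
    (d : LCQK R V) (s : QCRSub R V d)
    (Hm : V) (hHnor : s.IsNormal Hm)
    (humb : ∀ X ∈ s.Tg, ∀ Y ∈ s.Tg, s.h X Y = d.g X Y • Hm) :
    ∀ (a : Fin 3), ∀ X ∈ s.DD, ∀ Y ∈ s.Dp,
      d.R4 X Y (d.J a X) (d.J a Y) = 0 :=
  curvature_JJ_vanishes_general d s Hm humb
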